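/- arXiv:2011.11173 — 4 statements merged into one kernel-verified Lean document; each statement's English description precedes it below -/
import Mathlib

section
/- (Function gap deviation) For all points x, y ∈ E, all Borel probability measures μ, ν on Z, and every constant W ≥ 0 such that |∫ g dμ − ∫ g dν| ≤ W for every 1-Lipschitz function g : Z → ℝ, one has |[f_μ(y) − f_μ(x)] − [f_ν(y) − f_ν(x)]| ≤ β · ‖y − x‖ · W. -/
/-!
By Kantorovich–Rubinstein duality, a `K`-Lipschitz map `F : Z → E` satisfies
`‖∫ F dμ - ∫ F dν‖ ≤ K W` (test against a norm-one functional given by Hahn–Banach). Applied to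
`z ↦ ∇ℓ(u, z)` this bounds the gradient of `f_μ - f_ν` by `β W` at every point `u`, and the mean
value theorem turns this into the claimed bound on `(f_μ - f_ν)(y) - (f_μ - f_ν)(x)`.
-/

open MeasureTheory Set
open scoped NNReal

theorem HasGradientAt.sub {𝕜 F : Type*} [RCLike 𝕜] [NormedAddCommGroup F]
    [InnerProductSpace 𝕜 F] [CompleteSpace F] {f g : F → 𝕜} {f' g' x : F}
    (hf : HasGradientAt f f' x) (hg : HasGradientAt g g' x) :
    HasGradientAt (fun x => f x - g x) (f' - g') x := by
  rw [hasGradientAt_iff_hasFDerivAt, map_sub]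
  exact hf.hasFDerivAt.sub hg.hasFDerivAt

theorem norm_image_sub_le_of_norm_hasGradientAt_le {E : Type*} [NormedAddCommGroup E]
    [InnerProductSpace ℝ E] [CompleteSpace E] {f : E → ℝ} {f' : E → E} {C : ℝ}
    (hf : ∀ x, HasGradientAt f (f' x) x) (bound : ∀ x, ‖f' x‖ ≤ C) (x y : E) :
    ‖f y - f x‖ ≤ C * ‖y - x‖ :=
  convex_univ.norm_image_sub_le_of_norm_hasFDerivWithin_le
    (fun u _ => (hf u).hasFDerivAt.hasFDerivWithinAt) (fun u _ => by simpa using bound u)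
    (mem_univ x) (mem_univ y)

section KantorovichRubinstein

variable {Z : Type*} [MetricSpace Z] [MeasurableSpace Z] {μ ν : Measure Z} {W : ℝ}

theorem abs_integral_sub_le_of_lipschitzWith
    (hdual : ∀ g : Z → ℝ, LipschitzWith 1 g → |(∫ z, g z ∂μ) - ∫ z, g z ∂ν| ≤ W)
    {K : ℝ≥0} {g : Z → ℝ} (hg : LipschitzWith K g) :
    |(∫ z, g z ∂μ) - ∫ z, g z ∂ν| ≤ K * W := by
  set D := |(∫ z, g z ∂μ) - ∫ z, g z ∂ν|
  have scaled : ∀ c : ℝ, ‖c‖₊ * K ≤ 1 → |c| * D ≤ W := fun c hc => by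
    have := hdual (fun z => c * g z) (((lipschitzWith_smul c).comp hg).weaken hc)
    rwa [integral_const_mul, integral_const_mul, ← mul_sub, abs_mul] at this
  rcases eq_or_ne K 0 with rfl | hK
  · -- a `0`-Lipschitz `g` may be scaled by any `c`, which forces `D = 0`
    by_contra! hD
    rw [NNReal.coe_zero, zero_mul] at hD
    have := scaled ((|W| + 1) / D) (by simp)
    rw [abs_of_pos (by positivity), div_mul_cancel₀ _ hD.ne'] at this
    linarith [le_abs_self W]
  · have := scaled K⁻¹ (by simp [hK])
    rwa [abs_of_nonneg (by positivity), inv_mul_le_iff₀ (by positivity)] at this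

theorem norm_integral_sub_le_of_lipschitzWith {E : Type*} [NormedAddCommGroup E]
    [NormedSpace ℝ E] [CompleteSpace E] (hW : 0 ≤ W)
    (hdual : ∀ g : Z → ℝ, LipschitzWith 1 g → |(∫ z, g z ∂μ) - ∫ z, g z ∂ν| ≤ W)
    {K : ℝ≥0} {F : Z → E} (hF : LipschitzWith K F) (hFμ : Integrable F μ)
    (hFν : Integrable F ν) :
    ‖(∫ z, F z ∂μ) - ∫ z, F z ∂ν‖ ≤ K * W := by
  obtain ⟨φ, hφ, hφ_apply⟩ := exists_dual_vector'' ℝ ((∫ z, F z ∂μ) - ∫ z, F z ∂ν)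
  calc ‖(∫ z, F z ∂μ) - ∫ z, F z ∂ν‖
      = φ ((∫ z, F z ∂μ) - ∫ z, F z ∂ν) := by simpa using hφ_apply.symm
    _ = (∫ z, φ (F z) ∂μ) - ∫ z, φ (F z) ∂ν := by
        rw [map_sub, φ.integral_comp_comm hFμ, φ.integral_comp_comm hFν]
    _ ≤ (‖φ‖₊ * K : ℝ≥0) * W :=
        (le_abs_self _).trans (abs_integral_sub_le_of_lipschitzWith hdual (φ.lipschitz.comp hF))
    _ ≤ K * W := by
        push_cast
        gcongr
        exact mul_le_of_le_one_left K.2 hφ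

end KantorovichRubinstein

theorem function_gap_deviation_general
    {E : Type*} [NormedAddCommGroup E] [InnerProductSpace ℝ E] [FiniteDimensional ℝ E]
    {Z : Type*} [MetricSpace Z] [MeasurableSpace Z]
    (ℓ : E → Z → ℝ) (G : E → Z → E) (β : ℝ) (hβ : 0 ≤ β)
    (hlip : ∀ (x : E) (z z' : Z), ‖G x z - G x z'‖ ≤ β * dist z z')
    (μ ν : Measure Z)
    (hintGμ : ∀ x : E, Integrable (fun z => G x z) μ)
    (hintGν : ∀ x : E, Integrable (fun z => G x z) ν)
    (hfμ : ∀ x : E, HasGradientAt (fun x' => ∫ z, ℓ x' z ∂μ) (∫ z, G x z ∂μ) x)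
    (hfν : ∀ x : E, HasGradientAt (fun x' => ∫ z, ℓ x' z ∂ν) (∫ z, G x z ∂ν) x)
    (x y : E) (W : ℝ) (hW : 0 ≤ W)
    (hdual : ∀ g : Z → ℝ, LipschitzWith 1 g → |(∫ z, g z ∂μ) - ∫ z, g z ∂ν| ≤ W) :
    |((∫ z, ℓ y z ∂μ) - ∫ z, ℓ x z ∂μ) - ((∫ z, ℓ y z ∂ν) - ∫ z, ℓ x z ∂ν)|
      ≤ β * ‖y - x‖ * W := by
  have gradient_gap (u : E) : ‖(∫ z, G u z ∂μ) - ∫ z, G u z ∂ν‖ ≤ β * W := by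
    have hG : LipschitzWith (Real.toNNReal β) (G u) :=
      LipschitzWith.of_dist_le' fun z z' => by simpa only [dist_eq_norm] using hlip u z z'
    simpa [Real.coe_toNNReal _ hβ] using
      norm_integral_sub_le_of_lipschitzWith hW hdual hG (hintGμ u) (hintGν u)
  have mean_value := norm_image_sub_le_of_norm_hasGradientAt_le
    (fun u => (hfμ u).sub (hfν u)) gradient_gap x y
  rw [Real.norm_eq_abs] at mean_value
  calc _ = |((∫ z, ℓ y z ∂μ) - ∫ z, ℓ y z ∂ν) - ((∫ z, ℓ x z ∂μ) - ∫ z, ℓ x z ∂ν)| := by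
        ring_nf
    _ ≤ β * W * ‖y - x‖ := mean_value
    _ = β * ‖y - x‖ * W := by ring

/-- **Function gap deviation.** With `f_μ(x) = ∫ ℓ(x,z) dμ(z)` and `W` dominating the
Wasserstein-1 distance between `μ` and `ν` in the dual sense, the deviation of function gaps
satisfies `|[f_μ(y) − f_μ(x)] − [f_ν(y) − f_ν(x)]| ≤ β·‖y − x‖·W`. -/
theorem function_gap_deviation
    {E : Type*} [NormedAddCommGroup E] [InnerProductSpace ℝ E] [FiniteDimensional ℝ E]
    {Z : Type*} [MetricSpace Z] [MeasurableSpace Z] [BorelSpace Z]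
    (ℓ : E → Z → ℝ) (G : E → Z → E) (β : ℝ) (hβ : 0 ≤ β)
    (hgrad : ∀ (x : E) (z : Z), HasGradientAt (fun x' => ℓ x' z) (G x z) x)
    (hlip : ∀ (x : E) (z z' : Z), ‖G x z - G x z'‖ ≤ β * dist z z')
    (μ ν : Measure Z) [IsProbabilityMeasure μ] [IsProbabilityMeasure ν]
    (hintμ : ∀ x : E, Integrable (fun z => ℓ x z) μ)
    (hintν : ∀ x : E, Integrable (fun z => ℓ x z) ν)
    (hintGμ : ∀ x : E, Integrable (fun z => G x z) μ)
    (hintGν : ∀ x : E, Integrable (fun z => G x z) ν)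
    (hfμ : ∀ x : E, HasGradientAt (fun x' => ∫ z, ℓ x' z ∂μ) (∫ z, G x z ∂μ) x)
    (hfν : ∀ x : E, HasGradientAt (fun x' => ∫ z, ℓ x' z ∂ν) (∫ z, G x z ∂ν) x)
    (x y : E) (W : ℝ) (hW : 0 ≤ W)
    (hdual : ∀ g : Z → ℝ, LipschitzWith 1 g → |(∫ z, g z ∂μ) - ∫ z, g z ∂ν| ≤ W) :
    |((∫ z, ℓ y z ∂μ) - ∫ z, ℓ x z ∂μ) - ((∫ z, ℓ y z ∂ν) - ∫ z, ℓ x z ∂ν)|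
      ≤ β * ‖y - x‖ * W :=
  function_gap_deviation_general ℓ G β hβ hlip μ ν hintGμ hintGν hfμ hfν x y W hW hdual
end

section
/- (Gradient and function gap deviations under a Lipschitz distribution map) For all points x, y, u, v, w ∈ E the following two estimates hold: ‖∇f_x(w) − ∇f_y(w)‖ ≤ γβ·‖x − y‖, and |(f_x(u) − f_x(v)) − (f_y(u) − f_y(v))| ≤ γβ·‖x − y‖·‖u − v‖. -/
/-!
Both estimates come from testing the Kantorovich–Rubinstein bound on `D` against a Lipschitz
function of `z`. For the gradients these are the functions `z ↦ φ (∇ℓ(w, z))`, `φ` a dual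
vector, and Hahn–Banach recovers the norm. For the gap it is `z ↦ ℓ(u, z) − ℓ(v, z)`, which by
the mean value inequality along the segment `[v, u]` is `β‖u − v‖`-Lipschitz.
-/

open MeasureTheory Set

noncomputable section

open scoped NNReal

section KantorovichRubinstein

variable {Z : Type*} [MetricSpace Z] [MeasurableSpace Z] {μ ν : Measure Z} {C : ℝ}

theorem abs_integral_sub_integral_le_of_lipschitzWith [IsProbabilityMeasure μ]
    [IsProbabilityMeasure ν]
    (h : ∀ g : Z → ℝ, LipschitzWith 1 g → |∫ z, g z ∂μ - ∫ z, g z ∂ν| ≤ C)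
    {K : ℝ≥0} {g : Z → ℝ} (hg : LipschitzWith K g) :
    |∫ z, g z ∂μ - ∫ z, g z ∂ν| ≤ K * C := by
  obtain rfl | hK := eq_or_ne K 0
  · obtain ⟨z₀⟩ := nonempty_of_isProbabilityMeasure μ
    have hconst : g = fun _ => g z₀ := funext fun z => by
      simpa only [NNReal.coe_zero, zero_mul, dist_le_zero] using hg.dist_le_mul z z₀
    rw [hconst]
    simp
  · have hKpos : 0 < (K : ℝ) := NNReal.coe_pos.mpr (pos_iff_ne_zero.mpr hK)
    have hscaled : LipschitzWith 1 fun z => (K : ℝ)⁻¹ * g z := by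
      refine LipschitzWith.of_dist_le_mul fun z z' => ?_
      rw [Real.dist_eq, ← mul_sub, abs_mul, abs_inv, NNReal.abs_eq, ← Real.dist_eq,
        NNReal.coe_one, one_mul, inv_mul_le_iff₀ hKpos]
      exact hg.dist_le_mul z z'
    have hdev := h _ hscaled
    rwa [integral_const_mul, integral_const_mul, ← mul_sub, abs_mul, abs_inv, NNReal.abs_eq,
      inv_mul_le_iff₀ hKpos] at hdev

theorem norm_integral_sub_integral_le_of_lipschitzWith [IsProbabilityMeasure μ]
    [IsProbabilityMeasure ν] {E : Type*} [NormedAddCommGroup E] [NormedSpace ℝ E]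
    [CompleteSpace E]
    (h : ∀ g : Z → ℝ, LipschitzWith 1 g → |∫ z, g z ∂μ - ∫ z, g z ∂ν| ≤ C)
    {K : ℝ≥0} {G : Z → E} (hG : LipschitzWith K G) (hμ : Integrable G μ) (hν : Integrable G ν) :
    ‖∫ z, G z ∂μ - ∫ z, G z ∂ν‖ ≤ K * C := by
  have hKC : 0 ≤ K * C :=
    (abs_nonneg _).trans <| abs_integral_sub_integral_le_of_lipschitzWith h
      ((LipschitzWith.const (0 : ℝ)).weaken K.zero_le_coe)
  refine NormedSpace.norm_le_dual_bound ℝ _ hKC fun f => ?_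
  have hdev := abs_integral_sub_integral_le_of_lipschitzWith h (f.lipschitz.comp hG)
  rw [Function.comp_def, f.integral_comp_comm hμ, f.integral_comp_comm hν, ← map_sub] at hdev
  rw [Real.norm_eq_abs]
  refine hdev.trans_eq ?_
  push_cast
  ring

end KantorovichRubinstein

theorem lipschitzWith_sub_of_hasGradientAt {E Z : Type*} [NormedAddCommGroup E]
    [InnerProductSpace ℝ E] [CompleteSpace E] [PseudoMetricSpace Z]
    {ℓ : E → Z → ℝ} {G : E → Z → E} {K : ℝ≥0}
    (hgrad : ∀ x z, HasGradientAt (fun x' => ℓ x' z) (G x z) x)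
    (hG : ∀ x, LipschitzWith K (G x)) (u v : E) :
    LipschitzWith (K * ‖u - v‖₊) fun z => ℓ u z - ℓ v z := by
  refine LipschitzWith.of_dist_le_mul fun z z' => ?_
  have hmv := Convex.norm_image_sub_le_of_norm_hasFDerivWithin_le (s := univ) (x := v) (y := u)
    (f := fun p => ℓ p z - ℓ p z')
    (fun p _ => ((hgrad p z).hasFDerivAt.sub (hgrad p z').hasFDerivAt).hasFDerivWithinAt)
    (fun p _ => by
      rw [← map_sub, LinearIsometryEquiv.norm_map, ← dist_eq_norm]
      exact (hG p).dist_le_mul z z')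
    convex_univ trivial trivial
  calc dist (ℓ u z - ℓ v z) (ℓ u z' - ℓ v z')
      = ‖(ℓ u z - ℓ u z') - (ℓ v z - ℓ v z')‖ := by rw [dist_eq_norm]; ring_nf
    _ ≤ K * dist z z' * ‖u - v‖ := hmv
    _ = ↑(K * ‖u - v‖₊) * dist z z' := by push_cast; ring

theorem grad_and_gap_deviation_state_dependent_general
    {E : Type*} [NormedAddCommGroup E] [InnerProductSpace ℝ E] [FiniteDimensional ℝ E]
    {Z : Type*} [MetricSpace Z] [MeasurableSpace Z]
    (ℓ : E → Z → ℝ) (G : E → Z → E) (β γ : ℝ) (hβ : 0 ≤ β)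
    (hgrad : ∀ (x : E) (z : Z), HasGradientAt (fun x' => ℓ x' z) (G x z) x)
    (hlip : ∀ (x : E) (z z' : Z), ‖G x z - G x z'‖ ≤ β * dist z z')
    (D : E → Measure Z) (hD : ∀ x : E, IsProbabilityMeasure (D x))
    (hint : ∀ x y : E, Integrable (fun z => ℓ y z) (D x))
    (hintG : ∀ x y : E, Integrable (fun z => G y z) (D x))
    (hDlip : ∀ x y : E, ∀ g : Z → ℝ, LipschitzWith 1 g →
      |(∫ z, g z ∂(D x)) - ∫ z, g z ∂(D y)| ≤ γ * ‖x - y‖)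
    (x y u v w : E) :
    ‖(∫ z, G w z ∂(D x)) - ∫ z, G w z ∂(D y)‖ ≤ γ * β * ‖x - y‖ ∧
    |((∫ z, ℓ u z ∂(D x)) - ∫ z, ℓ v z ∂(D x)) -
        ((∫ z, ℓ u z ∂(D y)) - ∫ z, ℓ v z ∂(D y))|
      ≤ γ * β * ‖x - y‖ * ‖u - v‖ := by
  have hGK : ∀ x, LipschitzWith β.toNNReal (G x) := fun x =>
    LipschitzWith.of_dist_le' fun z z' => by simpa only [dist_eq_norm] using hlip x z z'
  have hβK : (β.toNNReal : ℝ) = β := Real.coe_toNNReal β hβ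
  have hx := hD x
  have hy := hD y
  constructor
  · have hdev := norm_integral_sub_integral_le_of_lipschitzWith (hDlip x y) (hGK w)
      (hintG x w) (hintG y w)
    rw [hβK] at hdev
    linarith
  · have hdev := abs_integral_sub_integral_le_of_lipschitzWith (hDlip x y)
      (lipschitzWith_sub_of_hasGradientAt hgrad hGK u v)
    rw [integral_sub (hint x u) (hint x v), integral_sub (hint y u) (hint y v)] at hdev
    push_cast [hβK] at hdev
    linarith

/-- **Gradient and function gap deviations under a γ-Lipschitz distribution map.**
With `f_x(y) = ∫ ℓ(y,z) dD(x)(z)`, for all `x, y, u, v, w`: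
`‖∇f_x(w) − ∇f_y(w)‖ ≤ γβ‖x − y‖` and
`|(f_x(u) − f_x(v)) − (f_y(u) − f_y(v))| ≤ γβ‖x − y‖‖u − v‖`. -/
theorem grad_and_gap_deviation_state_dependent
    {E : Type*} [NormedAddCommGroup E] [InnerProductSpace ℝ E] [FiniteDimensional ℝ E]
    {Z : Type*} [MetricSpace Z] [MeasurableSpace Z] [BorelSpace Z]
    (ℓ : E → Z → ℝ) (G : E → Z → E) (β γ : ℝ) (hβ : 0 ≤ β) (hγ : 0 ≤ γ)
    (hgrad : ∀ (x : E) (z : Z), HasGradientAt (fun x' => ℓ x' z) (G x z) x)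
    (hlip : ∀ (x : E) (z z' : Z), ‖G x z - G x z'‖ ≤ β * dist z z')
    (D : E → Measure Z) (hD : ∀ x : E, IsProbabilityMeasure (D x))
    (hint : ∀ x y : E, Integrable (fun z => ℓ y z) (D x))
    (hintG : ∀ x y : E, Integrable (fun z => G y z) (D x))
    (hf : ∀ x y : E, HasGradientAt (fun y' => ∫ z, ℓ y' z ∂(D x)) (∫ z, G y z ∂(D x)) y)
    (hDlip : ∀ x y : E, ∀ g : Z → ℝ, LipschitzWith 1 g →
      |(∫ z, g z ∂(D x)) - ∫ z, g z ∂(D y)| ≤ γ * ‖x - y‖)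
    (x y u v w : E) :
    ‖(∫ z, G w z ∂(D x)) - ∫ z, G w z ∂(D y)‖ ≤ γ * β * ‖x - y‖ ∧
    |((∫ z, ℓ u z ∂(D x)) - ∫ z, ℓ v z ∂(D x)) -
        ((∫ z, ℓ u z ∂(D y)) - ∫ z, ℓ v z ∂(D y))|
      ≤ γ * β * ‖x - y‖ * ‖u - v‖ :=
  grad_and_gap_deviation_state_dependent_general ℓ G β γ hβ hgrad hlip D hD hint hintG hDlip x y u v
    w
end
end

section
/- (Reduction to online convex optimization) Suppose f_{x̄} is α-strongly convex, set ρ := γβ/α, and assume ρ < 1/2. Let (Ω, P) be a probability space, let x_1, …, x_t : Ω → E be random vectors (with all quantities below integrable), and suppose the expected regret bound E[Σ_{i=1}^t (f_{x_i}(x_i) + r(x_i) − f_{x_i}(x̄) − r(x̄))] ≤ U_t holds for a constant U_t. Then the average iterate x̂_t := (1/t)Σ_{i=1}^t x_i satisfies E[φ(x̂_t)] − φ(x̄) ≤ U_t/((1 − 2ρ)·t). -/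
/-!
By strong convexity, `φ` grows quadratically away from its minimizer:
`φ y - φ x̄ ≥ (α/2)‖y - x̄‖²`. Moving the distribution from `D(x̄)` to `D(y)` changes
`f(y) - f(x̄)` by at most `γβ‖y - x̄‖²`, because `z ↦ ℓ(y, z) - ℓ(x̄, z)` is
`β‖y - x̄‖`-Lipschitz by the mean value theorem. Hence the regret at `y` is at least
`(1 - 2ρ)(φ y - φ x̄)`. Jensen's inequality passes this to the average iterate, and taking
expectations gives the bound.
-/

open MeasureTheory Set Filter Topology

theorem StrongConvexOn.sq_norm_sub_le_of_isMinOn {E : Type*} [NormedAddCommGroup E]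
    [NormedSpace ℝ E] {s : Set E} {ψ : E → ℝ} {α : ℝ} {x₀ y : E}
    (hψ : StrongConvexOn s α ψ) (hmin : IsMinOn ψ s x₀) (hx₀ : x₀ ∈ s) (hy : y ∈ s) :
    α / 2 * ‖y - x₀‖ ^ 2 ≤ ψ y - ψ x₀ := by
  have hbound : ∀ l ∈ Ioo (0 : ℝ) 1, (1 - l) * (α / 2 * ‖y - x₀‖ ^ 2) ≤ ψ y - ψ x₀ := by
    rintro l ⟨hl₀, hl₁⟩
    have hconv := hψ.2 hy hx₀ hl₀.le (sub_nonneg.2 hl₁.le) (add_sub_cancel l 1)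
    have hmid := isMinOn_iff.1 hmin _
      (hψ.1 hy hx₀ hl₀.le (sub_nonneg.2 hl₁.le) (add_sub_cancel l 1))
    simp only [smul_eq_mul] at hconv
    refine le_of_mul_le_mul_left ?_ hl₀
    linarith
  have hlim : Tendsto (fun l : ℝ => (1 - l) * (α / 2 * ‖y - x₀‖ ^ 2)) (𝓝[>] 0)
      (𝓝 (α / 2 * ‖y - x₀‖ ^ 2)) := by
    have hcont : Continuous fun l : ℝ => (1 - l) * (α / 2 * ‖y - x₀‖ ^ 2) := by fun_prop
    exact (hcont.tendsto' 0 _ (by simp)).mono_left nhdsWithin_le_nhds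
  exact le_of_tendsto hlim (eventually_of_mem (Ioo_mem_nhdsGT zero_lt_one) hbound)

theorem dist_sub_sub_le_of_hasGradientAt {E Z : Type*} [NormedAddCommGroup E]
    [InnerProductSpace ℝ E] [CompleteSpace E] [PseudoMetricSpace Z] {ℓ : E → Z → ℝ}
    {G : E → Z → E} {β : ℝ}
    (hgrad : ∀ x z, HasGradientAt (fun x' => ℓ x' z) (G x z) x)
    (hlip : ∀ x z z', ‖G x z - G x z'‖ ≤ β * dist z z') (x y : E) (z z' : Z) :
    dist (ℓ y z - ℓ x z) (ℓ y z' - ℓ x z') ≤ β * ‖y - x‖ * dist z z' := by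
  have hmvt : ‖(ℓ y z - ℓ y z') - (ℓ x z - ℓ x z')‖ ≤ β * dist z z' * ‖y - x‖ := by
    refine convex_univ.norm_image_sub_le_of_norm_hasFDerivWithin_le
      (f := fun x' => ℓ x' z - ℓ x' z')
      (fun x' _ => ((hgrad x' z).hasFDerivAt.sub (hgrad x' z').hasFDerivAt).hasFDerivWithinAt)
      (fun x' _ => ?_) (mem_univ x) (mem_univ y)
    rw [← map_sub, LinearIsometryEquiv.norm_map]
    exact hlip x' z z'
  have hrearrange :
      (ℓ y z - ℓ x z) - (ℓ y z' - ℓ x z') = (ℓ y z - ℓ y z') - (ℓ x z - ℓ x z') := by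
    ring
  rw [Real.dist_eq, hrearrange, ← Real.norm_eq_abs]
  linarith

theorem abs_integral_sub_integral_le_of_dist_le {Z : Type*} [PseudoMetricSpace Z]
    [MeasurableSpace Z] {μ ν : Measure Z} {c : ℝ}
    (hμν : ∀ g : Z → ℝ, LipschitzWith 1 g → |∫ z, g z ∂μ - ∫ z, g z ∂ν| ≤ c)
    {g : Z → ℝ} {K : ℝ} (hK : 0 ≤ K) (hg : ∀ z z', dist (g z) (g z') ≤ K * dist z z') :
    |∫ z, g z ∂μ - ∫ z, g z ∂ν| ≤ K * c := by
  -- `K` may vanish, so rescale by every `K' > K` and let `K' → K`.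
  have hbound : ∀ K' ∈ Ioi K, |∫ z, g z ∂μ - ∫ z, g z ∂ν| ≤ K' * c := by
    intro K' hK'
    have hK'₀ : 0 < K' := hK.trans_lt hK'
    have hscaled : LipschitzWith 1 fun z => K'⁻¹ * g z := by
      refine LipschitzWith.of_dist_le_mul fun z z' => ?_
      rw [NNReal.coe_one, one_mul, Real.dist_eq, ← mul_sub, abs_mul,
        abs_of_pos (inv_pos.2 hK'₀), inv_mul_le_iff₀ hK'₀, ← Real.dist_eq]
      exact (hg z z').trans (mul_le_mul_of_nonneg_right hK'.le dist_nonneg)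
    have := hμν _ hscaled
    rwa [integral_const_mul, integral_const_mul, ← mul_sub, abs_mul,
      abs_of_pos (inv_pos.2 hK'₀), inv_mul_le_iff₀ hK'₀] at this
  have hlim : Tendsto (fun K' : ℝ => K' * c) (𝓝[>] K) (𝓝 (K * c)) :=
    ((continuous_id.mul continuous_const).tendsto K).mono_left nhdsWithin_le_nhds
  exact ge_of_tendsto hlim (eventually_of_mem self_mem_nhdsWithin hbound)

theorem mul_sub_le_regret_of_growth {E : Type*} [NormedAddCommGroup E] {f : E → E → ℝ}
    {r : E → ℝ} {x₀ y : E} {α κ : ℝ} (hα : 0 < α) (hκ : 0 ≤ κ)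
    (hgrowth : α / 2 * ‖y - x₀‖ ^ 2 ≤ f x₀ y + r y - (f x₀ x₀ + r x₀))
    (hshift : |(f y y - f y x₀) - (f x₀ y - f x₀ x₀)| ≤ κ * ‖y - x₀‖ ^ 2) :
    (1 - 2 * (κ / α)) * (f x₀ y + r y - (f x₀ x₀ + r x₀)) ≤ f y y + r y - f y x₀ - r x₀ := by
  have hscaled : κ * ‖y - x₀‖ ^ 2 ≤ 2 * (κ / α) * (f x₀ y + r y - (f x₀ x₀ + r x₀)) :=
    calc κ * ‖y - x₀‖ ^ 2 = 2 * (κ / α) * (α / 2 * ‖y - x₀‖ ^ 2) := by field_simp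
      _ ≤ _ := mul_le_mul_of_nonneg_left hgrowth (by positivity)
  linarith [neg_abs_le ((f y y - f y x₀) - (f x₀ y - f x₀ x₀))]

theorem ConvexOn.map_fintype_average_le {E ι : Type*} [AddCommGroup E] [Module ℝ E]
    [Fintype ι] [Nonempty ι] {φ : E → ℝ} (hφ : ConvexOn ℝ univ φ) (p : ι → E) :
    φ ((Fintype.card ι : ℝ)⁻¹ • ∑ i, p i) ≤ (Fintype.card ι : ℝ)⁻¹ * ∑ i, φ (p i) := by
  have := hφ.map_centerMass_le (t := Finset.univ) (w := fun _ => (1 : ℝ)) (p := p)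
    (fun _ _ => zero_le_one) (by simp [Fintype.card_pos]) (fun _ _ => mem_univ _)
  simpa [Finset.centerMass] using this

theorem ConvexOn.mul_sub_average_le {E ι : Type*} [AddCommGroup E] [Module ℝ E] [Fintype ι]
    [Nonempty ι] {φ R : E → ℝ} {x₀ : E} {c : ℝ} (hφ : ConvexOn ℝ univ φ) (hc : 0 ≤ c)
    (hR : ∀ y, c * (φ y - φ x₀) ≤ R y) (p : ι → E) :
    c * (φ ((Fintype.card ι : ℝ)⁻¹ • ∑ i, p i) - φ x₀)
      ≤ (Fintype.card ι : ℝ)⁻¹ * ∑ i, R (p i) := by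
  calc c * (φ ((Fintype.card ι : ℝ)⁻¹ • ∑ i, p i) - φ x₀)
      ≤ c * ((Fintype.card ι : ℝ)⁻¹ * ∑ i, φ (p i) - φ x₀) := by
        gcongr
        exact hφ.map_fintype_average_le p
    _ = (Fintype.card ι : ℝ)⁻¹ * ∑ i, c * (φ (p i) - φ x₀) := by
        rw [← Finset.mul_sum, Finset.sum_sub_distrib, Finset.sum_const, Finset.card_univ,
          nsmul_eq_mul]
        field_simp
    _ ≤ (Fintype.card ι : ℝ)⁻¹ * ∑ i, R (p i) := by
        gcongr with i
        exact hR (p i)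

theorem integral_sub_le_div_of_forall_le {Ω : Type*} [MeasurableSpace Ω] {P : Measure Ω}
    [IsProbabilityMeasure P] {A R : Ω → ℝ} {a c s U : ℝ} (hc : 0 < c) (hs : 0 < s)
    (hA : Integrable A P) (hR : Integrable R P) (hle : ∀ ω, c * (A ω - a) ≤ s⁻¹ * R ω)
    (hU : ∫ ω, R ω ∂P ≤ U) :
    ∫ ω, A ω ∂P - a ≤ U / (c * s) := by
  have hint : c * (∫ ω, A ω ∂P - a) ≤ s⁻¹ * U :=
    calc c * (∫ ω, A ω ∂P - a) = ∫ ω, c * (A ω - a) ∂P := by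
          rw [integral_const_mul, integral_sub hA (integrable_const a), integral_const,
            probReal_univ, one_smul]
      _ ≤ ∫ ω, s⁻¹ * R ω ∂P :=
          integral_mono ((hA.sub (integrable_const a)).const_mul c) (hR.const_mul _) hle
      _ = s⁻¹ * ∫ ω, R ω ∂P := integral_const_mul _ _
      _ ≤ s⁻¹ * U := by gcongr
  rw [le_div_iff₀ (mul_pos hc hs)]
  calc (∫ ω, A ω ∂P - a) * (c * s) = s * (c * (∫ ω, A ω ∂P - a)) := by ring
    _ ≤ s * (s⁻¹ * U) := by gcongr
    _ = U := by field_simp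

theorem reduction_to_online_general
    {E : Type*} [NormedAddCommGroup E] [InnerProductSpace ℝ E] [FiniteDimensional ℝ E]
    {Z : Type*} [MetricSpace Z] [MeasurableSpace Z]
    (ℓ : E → Z → ℝ) (G : E → Z → E) (β γ : ℝ) (hβ : 0 ≤ β) (hγ : 0 ≤ γ)
    (hgrad : ∀ (x : E) (z : Z), HasGradientAt (fun x' => ℓ x' z) (G x z) x)
    (hlip : ∀ (x : E) (z z' : Z), ‖G x z - G x z'‖ ≤ β * dist z z')
    (D : E → Measure Z)
    (hint : ∀ x y : E, Integrable (fun z => ℓ y z) (D x))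
    (f : E → E → ℝ)
    (hfdef : ∀ x y : E, f x y = ∫ z, ℓ y z ∂(D x))
    (hDlip : ∀ x y : E, ∀ g : Z → ℝ, LipschitzWith 1 g →
      |(∫ z, g z ∂(D x)) - ∫ z, g z ∂(D y)| ≤ γ * ‖x - y‖)
    (r : E → ℝ) (hr : ConvexOn ℝ univ r)
    (xbar : E) (hxbar : ∀ y : E, f xbar xbar + r xbar ≤ f xbar y + r y)
    (α : ℝ) (hα : 0 < α)
    (hsc : ConvexOn ℝ univ (fun y => f xbar y - α / 2 * ‖y‖ ^ 2))
    (hρ : γ * β / α < 1 / 2)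
    {Ω : Type*} [MeasurableSpace Ω] (P : Measure Ω) [IsProbabilityMeasure P]
    (t : ℕ) (ht : 0 < t) (x : Fin t → Ω → E)
    (U : ℝ)
    (hregret_int : Integrable (fun ω =>
      ∑ i : Fin t, (f (x i ω) (x i ω) + r (x i ω) - f (x i ω) xbar - r xbar)) P)
    (hregret : (∫ ω, (∑ i : Fin t,
        (f (x i ω) (x i ω) + r (x i ω) - f (x i ω) xbar - r xbar)) ∂P) ≤ U)
    (havg_int : Integrable (fun ω =>
      f xbar ((t : ℝ)⁻¹ • ∑ i : Fin t, x i ω) + r ((t : ℝ)⁻¹ • ∑ i : Fin t, x i ω)) P) :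
    (∫ ω, (f xbar ((t : ℝ)⁻¹ • ∑ i : Fin t, x i ω)
        + r ((t : ℝ)⁻¹ • ∑ i : Fin t, x i ω)) ∂P) - (f xbar xbar + r xbar)
      ≤ U / ((1 - 2 * (γ * β / α)) * t) := by
  set φ : E → ℝ := fun y => f xbar y + r y
  have hφ : StrongConvexOn univ α φ :=
    (strongConvexOn_iff_convex.2 hsc).add (uniformConvexOn_zero.2 hr) |>.mono fun _ => by simp
  have hgrowth (y : E) : α / 2 * ‖y - xbar‖ ^ 2 ≤ φ y - φ xbar :=
    hφ.sq_norm_sub_le_of_isMinOn (isMinOn_univ_iff.2 hxbar) (mem_univ _) (mem_univ _)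
  have hshift (y : E) :
      |(f y y - f y xbar) - (f xbar y - f xbar xbar)| ≤ γ * β * ‖y - xbar‖ ^ 2 := by
    have hdiff (w : E) : ∫ z, (ℓ y z - ℓ xbar z) ∂(D w) = f w y - f w xbar := by
      rw [integral_sub (hint w y) (hint w xbar), hfdef, hfdef]
    have hKR := abs_integral_sub_integral_le_of_dist_le (hDlip y xbar) (by positivity)
      (dist_sub_sub_le_of_hasGradientAt hgrad hlip xbar y)
    rw [hdiff, hdiff] at hKR
    linarith
  have hregret_pt (y : E) :
      (1 - 2 * (γ * β / α)) * (φ y - φ xbar) ≤ f y y + r y - f y xbar - r xbar :=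
    mul_sub_le_regret_of_growth hα (by positivity) (hgrowth y) (hshift y)
  have hc : 0 < 1 - 2 * (γ * β / α) := by linarith
  have hnonempty : Nonempty (Fin t) := ⟨⟨0, ht⟩⟩
  refine integral_sub_le_div_of_forall_le hc (by exact_mod_cast ht) havg_int hregret_int
    (fun ω => ?_) hregret
  simpa using (hφ.convexOn fun _ => by positivity).mul_sub_average_le hc.le hregret_pt
    (fun i => x i ω)

/-- **Reduction to online convex optimization.** If `f_{x̄}` is `α`-strongly convex,
`ρ := γβ/α < 1/2`, and the expected regret against `x̄` is bounded by `U`, then the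
average iterate `x̂_t = (1/t)Σᵢ xᵢ` satisfies `E[φ(x̂_t)] − φ(x̄) ≤ U/((1 − 2ρ)t)`. -/
theorem reduction_to_online
    {E : Type*} [NormedAddCommGroup E] [InnerProductSpace ℝ E] [FiniteDimensional ℝ E]
    {Z : Type*} [MetricSpace Z] [MeasurableSpace Z] [BorelSpace Z]
    (ℓ : E → Z → ℝ) (G : E → Z → E) (β γ : ℝ) (hβ : 0 ≤ β) (hγ : 0 ≤ γ)
    (hgrad : ∀ (x : E) (z : Z), HasGradientAt (fun x' => ℓ x' z) (G x z) x)
    (hlip : ∀ (x : E) (z z' : Z), ‖G x z - G x z'‖ ≤ β * dist z z')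
    (D : E → Measure Z) (hD : ∀ x : E, IsProbabilityMeasure (D x))
    (hint : ∀ x y : E, Integrable (fun z => ℓ y z) (D x))
    (hintG : ∀ x y : E, Integrable (fun z => G y z) (D x))
    (f : E → E → ℝ) (Gf : E → E → E)
    (hfdef : ∀ x y : E, f x y = ∫ z, ℓ y z ∂(D x))
    (hGfdef : ∀ x y : E, Gf x y = ∫ z, G y z ∂(D x))
    (hfgrad : ∀ x y : E, HasGradientAt (f x) (Gf x y) y)
    (hDlip : ∀ x y : E, ∀ g : Z → ℝ, LipschitzWith 1 g →
      |(∫ z, g z ∂(D x)) - ∫ z, g z ∂(D y)| ≤ γ * ‖x - y‖)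
    (r : E → ℝ) (hr : ConvexOn ℝ univ r)
    (xbar : E) (hxbar : ∀ y : E, f xbar xbar + r xbar ≤ f xbar y + r y)
    (α : ℝ) (hα : 0 < α)
    (hsc : ConvexOn ℝ univ (fun y => f xbar y - α / 2 * ‖y‖ ^ 2))
    (hρ : γ * β / α < 1 / 2)
    {Ω : Type*} [MeasurableSpace Ω] (P : Measure Ω) [IsProbabilityMeasure P]
    (t : ℕ) (ht : 0 < t) (x : Fin t → Ω → E)
    (U : ℝ)
    (hregret_int : Integrable (fun ω =>
      ∑ i : Fin t, (f (x i ω) (x i ω) + r (x i ω) - f (x i ω) xbar - r xbar)) P)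
    (hregret : (∫ ω, (∑ i : Fin t,
        (f (x i ω) (x i ω) + r (x i ω) - f (x i ω) xbar - r xbar)) ∂P) ≤ U)
    (havg_int : Integrable (fun ω =>
      f xbar ((t : ℝ)⁻¹ • ∑ i : Fin t, x i ω) + r ((t : ℝ)⁻¹ • ∑ i : Fin t, x i ω)) P) :
    (∫ ω, (f xbar ((t : ℝ)⁻¹ • ∑ i : Fin t, x i ω)
        + r ((t : ℝ)⁻¹ • ∑ i : Fin t, x i ω)) ∂P) - (f xbar xbar + r xbar)
      ≤ U / ((1 - 2 * (γ * β / α)) * t) :=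
  reduction_to_online_general ℓ G β γ hβ hγ hgrad hlip D hint f hfdef hDlip r hr xbar hxbar α hα hsc
    hρ P t ht x U hregret_int hregret havg_int
end

section
/- (Strong convexity of the objective induced by stochastic models) Let (Ω, P) be a probability space, f : E → ℝ differentiable, r : E → ℝ convex, and for each x ∈ E let m_x : Ω → (E → ℝ) be a random model such that: (a) for almost every ω, m_x(ω) is convex and m_x(ω) + r is α₁-strongly convex; (b) for almost every ω, m_x(ω) is differentiable at x, and E[∇m_x(·)(x)] = ∇f(x); (c) for all x, y ∈ E, E[m_x(·)(x) − m_x(·)(y)] ≥ f(x) − f(y) + (α₂/2)‖x − y‖². Then F := f + r is (α₁ + α₂)-strongly convex. -/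
/-!
Fix a basepoint `x` and write `M_x(y) = E[m_x(·)(y)]`. Averaging the strong convexity of
`m_x(ω) + r` shows that `M_x + r` is `α₁`-strongly convex. For `x = a • y + b • z` the
accuracy condition bounds `f y` and `f z` from below by `f x - M_x(x) + M_x(·)` plus `α₂/2`
times `b² ‖y - z‖²` and `a² ‖y - z‖²`; averaging these with weights `a`, `b` yields the extra
`α₂/2 · a b ‖y - z‖²` on top of the strong convexity of `M_x + r` at `x`.
-/

open MeasureTheory Set

section ConvexCombination

variable {E : Type*} [NormedAddCommGroup E] [NormedSpace ℝ E]

lemma norm_smul_add_smul_sub_left {a b : ℝ} (hb : 0 ≤ b) (hab : a + b = 1) (x y : E) :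
    ‖a • x + b • y - x‖ = b * ‖x - y‖ := by
  obtain rfl : a = 1 - b := by linarith
  rw [show (1 - b) • x + b • y - x = b • (y - x) by module, norm_smul, norm_sub_rev,
    Real.norm_of_nonneg hb]

lemma norm_smul_add_smul_sub_right {a b : ℝ} (ha : 0 ≤ a) (hab : a + b = 1) (x y : E) :
    ‖a • x + b • y - y‖ = a * ‖x - y‖ := by
  rw [add_comm, norm_smul_add_smul_sub_left ha (by linarith), norm_sub_rev]

end ConvexCombination

lemma UniformConvexOn.integral {E Ω : Type*} [NormedAddCommGroup E] [NormedSpace ℝ E]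
    [MeasurableSpace Ω] {P : Measure Ω} [IsProbabilityMeasure P] {s : Set E} {φ : ℝ → ℝ}
    {g : Ω → E → ℝ} (hg : ∀ᵐ ω ∂P, UniformConvexOn s φ (g ω))
    (hint : ∀ y ∈ s, Integrable (fun ω => g ω y) P) :
    UniformConvexOn s φ (fun y => ∫ ω, g ω y ∂P) := by
  obtain ⟨ω₀, hω₀⟩ := hg.exists
  refine ⟨hω₀.1, fun x hx y hy a b ha hb hab => ?_⟩
  have hxy : a • x + b • y ∈ s := hω₀.1 hx hy ha hb hab
  have hcomb : Integrable (fun ω => a * g ω x + b * g ω y) P :=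
    ((hint x hx).const_mul a).add ((hint y hy).const_mul b)
  calc ∫ ω, g ω (a • x + b • y) ∂P
      ≤ ∫ ω, (a * g ω x + b * g ω y - a * b * φ ‖x - y‖) ∂P :=
        integral_mono_ae (hint _ hxy) (hcomb.sub (integrable_const _)) <| by
          filter_upwards [hg] with ω hω using hω.2 hx hy ha hb hab
    _ = a • ∫ ω, g ω x ∂P + b • ∫ ω, g ω y ∂P - a * b * φ ‖x - y‖ := by
        rw [integral_sub hcomb (integrable_const _),
          integral_add ((hint x hx).const_mul a) ((hint y hy).const_mul b),
          integral_const_mul, integral_const_mul, integral_const]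
        simp

theorem strongConvexOn_add_of_model {E : Type*} [NormedAddCommGroup E] [NormedSpace ℝ E]
    {s : Set E} (hs : Convex ℝ s) {f r : E → ℝ} {M : E → E → ℝ} {α₁ α₂ : ℝ}
    (hM : ∀ x ∈ s, StrongConvexOn s α₁ (M x + r))
    (hacc : ∀ x ∈ s, ∀ y ∈ s, f x - f y + α₂ / 2 * ‖x - y‖ ^ 2 ≤ M x x - M x y) :
    StrongConvexOn s (α₁ + α₂) (f + r) := by
  refine ⟨hs, fun y hy z hz a b ha hb hab => ?_⟩
  set x := a • y + b • z
  have hx : x ∈ s := hs hy hz ha hb hab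
  have hconv := (hM x hx).2 hy hz ha hb hab
  have hy' := hacc x hx y hy
  have hz' := hacc x hx z hz
  rw [norm_smul_add_smul_sub_left hb hab] at hy'
  rw [norm_smul_add_smul_sub_right ha hab] at hz'
  simp only [Pi.add_apply, smul_eq_mul] at hconv ⊢
  obtain rfl : a = 1 - b := by linarith
  linear_combination hconv + mul_le_mul_of_nonneg_left hy' ha + mul_le_mul_of_nonneg_left hz' hb

theorem model_induced_strong_convexity_general
    {E : Type*} [NormedAddCommGroup E] [InnerProductSpace ℝ E]
    {Ω : Type*} [MeasurableSpace Ω] (P : Measure Ω) [IsProbabilityMeasure P]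
    (f : E → ℝ)
    (r : E → ℝ)
    (α₁ α₂ : ℝ)
    (m : E → Ω → E → ℝ)
    (hint : ∀ x y : E, Integrable (fun ω => m x ω y) P)
    (ha : ∀ x : E, ∀ᵐ ω ∂P, ConvexOn ℝ univ (m x ω) ∧
      ConvexOn ℝ univ (fun y => m x ω y + r y - α₁ / 2 * ‖y‖ ^ 2))
    (hc : ∀ x y : E, (∫ ω, (m x ω x - m x ω y) ∂P)
      ≥ f x - f y + α₂ / 2 * ‖x - y‖ ^ 2) :
    ConvexOn ℝ univ (fun x => f x + r x - (α₁ + α₂) / 2 * ‖x‖ ^ 2) := by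
  have hmodel (x : E) : StrongConvexOn univ α₁ ((fun y => ∫ ω, m x ω y ∂P) + r) := by
    have hsum : StrongConvexOn univ α₁ (fun y => ∫ ω, (m x ω + r) y ∂P) :=
      UniformConvexOn.integral
        (by filter_upwards [ha x] with ω hω using strongConvexOn_iff_convex.mpr hω.2)
        (fun y _ => (hint x y).add (integrable_const _))
    convert hsum using 2 with y
    simp [integral_add (hint x y) (integrable_const (r y))]
  have hacc (x y : E) : f x - f y + α₂ / 2 * ‖x - y‖ ^ 2
      ≤ ∫ ω, m x ω x ∂P - ∫ ω, m x ω y ∂P :=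
    (integral_sub (hint x x) (hint x y)) ▸ hc x y
  exact strongConvexOn_iff_convex.mp <|
    strongConvexOn_add_of_model convex_univ (fun x _ => hmodel x) (fun x _ y _ => hacc x y)

/-- **Strong convexity of the objective induced by stochastic models.** If the random models
`m_x` are a.s. convex with `m_x + r` being `α₁`-strongly convex, are unbiased at the basepoint
(`E[∇m_x(x)] = ∇f(x)`), and are accurate (`E[m_x(x) − m_x(y)] ≥ f(x) − f(y) + (α₂/2)‖x−y‖²`),
then `F = f + r` is `(α₁ + α₂)`-strongly convex. -/
theorem model_induced_strong_convexity
    {E : Type*} [NormedAddCommGroup E] [InnerProductSpace ℝ E] [FiniteDimensional ℝ E]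
    {Ω : Type*} [MeasurableSpace Ω] (P : Measure Ω) [IsProbabilityMeasure P]
    (f : E → ℝ) (f' : E → E) (hf : ∀ x : E, HasGradientAt f (f' x) x)
    (r : E → ℝ) (hr : ConvexOn ℝ univ r)
    (α₁ α₂ : ℝ) (hα₁ : 0 ≤ α₁) (hα₂ : 0 ≤ α₂)
    (m : E → Ω → E → ℝ) (m' : E → Ω → E)
    (hint : ∀ x y : E, Integrable (fun ω => m x ω y) P)
    (hint' : ∀ x : E, Integrable (fun ω => m' x ω) P)
    (ha : ∀ x : E, ∀ᵐ ω ∂P, ConvexOn ℝ univ (m x ω) ∧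
      ConvexOn ℝ univ (fun y => m x ω y + r y - α₁ / 2 * ‖y‖ ^ 2))
    (hb1 : ∀ x : E, ∀ᵐ ω ∂P, HasGradientAt (m x ω) (m' x ω) x)
    (hb2 : ∀ x : E, (∫ ω, m' x ω ∂P) = f' x)
    (hc : ∀ x y : E, (∫ ω, (m x ω x - m x ω y) ∂P)
      ≥ f x - f y + α₂ / 2 * ‖x - y‖ ^ 2) :
    ConvexOn ℝ univ (fun x => f x + r x - (α₁ + α₂) / 2 * ‖x‖ ^ 2) :=
  model_induced_strong_convexity_general P f r α₁ α₂ m hint ha hc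
end
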